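/- Let Φ be a K₁×K₁ positive semidefinite diagonal matrix and C a K₀×K₁ real matrix with K₀ ≤ K₁ and C C^T = I_{K₀}. Then ln det((C Φ C^T)²) ≤ ln det(C Φ² C^T), i.e., det(C Φ C^T)² ≤ det(C Φ² C^T). -/

import Mathlib

/-!
With `N = C Φ Cᵀ`, the difference `C Φ² Cᵀ - N² = (C Φ) (1 - Cᵀ C) (C Φ)ᵀ` is positive
semidefinite because `Cᵀ C` is an orthogonal projection, so `N² ≤ C Φ² Cᵀ` in the Loewner order.
The determinant is monotone on positive semidefinite matrices: conjugating by `B^{-1/2}` reduces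
`0 ≤ B ≤ A` to `1 ≤ B^{-1/2} A B^{-1/2}`, whose eigenvalues are all at least `1`.
-/

open Matrix
open scoped MatrixOrder

namespace Matrix

variable {m n : Type*} [Fintype n]

theorem isStarProjection_conjTranspose_mul_self {R : Type*} [Semiring R] [StarRing R]
    [Fintype m] [DecidableEq m] [DecidableEq n] {C : Matrix m n R}
    (hC : C * Cᴴ = 1) : IsStarProjection (Cᴴ * C) where
  isIdempotentElem := by
    rw [IsIdempotentElem, Matrix.mul_assoc, ← Matrix.mul_assoc C, hC, Matrix.one_mul]
  isSelfAdjoint := by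
    rw [IsSelfAdjoint, star_eq_conjTranspose, conjTranspose_mul, conjTranspose_conjTranspose]

section RCLike

open scoped ComplexOrder

variable {𝕜 : Type*} [RCLike 𝕜]

theorem mul_mul_conjTranspose_le_mul_mul_conjTranspose [Finite m] {A B : Matrix n n 𝕜}
    (h : A ≤ B) (X : Matrix m n 𝕜) : X * A * Xᴴ ≤ X * B * Xᴴ := by
  rw [le_iff, ← Matrix.sub_mul, ← Matrix.mul_sub]
  exact (le_iff.1 h).mul_mul_conjTranspose_same X

end RCLike

variable [DecidableEq n]

theorem one_le_det_of_one_le {A : Matrix n n ℝ} (h : 1 ≤ A) : 1 ≤ A.det := by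
  have hA : A.IsHermitian := (nonneg_iff_posSemidef.1 (zero_le_one.trans h)).isHermitian
  have hspec := (algebraMap_le_iff_le_spectrum (r := (1 : ℝ)) (a := A) hA).1 (by simpa using h)
  rw [hA.det_eq_prod_eigenvalues]
  exact Finset.one_le_prod fun i _ => hspec _ (hA.eigenvalues_mem_spectrum_real i)

theorem det_le_det_of_le {A B : Matrix n n ℝ} (hB : 0 ≤ B) (h : B ≤ A) : B.det ≤ A.det := by
  rcases (nonneg_iff_posSemidef.1 hB).det_nonneg.eq_or_lt with hdet | hdet
  · rw [← hdet]
    exact (nonneg_iff_posSemidef.1 (hB.trans h)).det_nonneg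
  set S := CFC.sqrt B
  have hSS : S * S = B := CFC.sqrt_mul_sqrt_self B
  have hSdet : S.det * S.det = B.det := by rw [← det_mul, hSS]
  have hSunit : IsUnit S.det := isUnit_iff_ne_zero.2 fun h0 => hdet.ne (by simp [← hSdet, h0])
  have hSinv : IsSelfAdjoint S⁻¹ := IsHermitian.inv (CFC.sqrt_nonneg B).isSelfAdjoint
  have hone : 1 ≤ S⁻¹ * A * S⁻¹ := by
    have := hSinv.conjugate_le_conjugate h
    rwa [← hSS, Matrix.mul_assoc, Matrix.mul_nonsing_inv_cancel_right _ _ hSunit,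
      Matrix.nonsing_inv_mul _ hSunit] at this
  have hdet_conj : (S⁻¹ * A * S⁻¹).det = A.det / B.det := by
    rw [det_mul, det_mul, det_nonsing_inv, Ring.inverse_eq_inv', ← hSdet]
    field_simp
  exact (one_le_div hdet).1 (hdet_conj ▸ one_le_det_of_one_le hone)

end Matrix

theorem det_sq_le_det_of_sq_general
    {K₀ K₁ : ℕ}
    (φ : Fin K₁ → ℝ)
    (C : Matrix (Fin K₀) (Fin K₁) ℝ) (hC : C * Cᵀ = 1) :
    (C * Matrix.diagonal φ * Cᵀ).det ^ 2
      ≤ (C * Matrix.diagonal (fun k => φ k ^ 2) * Cᵀ).det := by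
  set N := C * diagonal φ * Cᵀ
  have hN : Nᵀ = N := by simp [N, Matrix.mul_assoc]
  have hsq_nonneg : 0 ≤ N * N := by
    simpa [conjTranspose_eq_transpose_of_trivial, hN] using
      nonneg_iff_posSemidef.2 (posSemidef_self_mul_conjTranspose N)
  have hsq_le : N * N ≤ C * diagonal (fun k => φ k ^ 2) * Cᵀ := by
    rw [← conjTranspose_eq_transpose_of_trivial] at hC
    convert mul_mul_conjTranspose_le_mul_mul_conjTranspose
      (isStarProjection_conjTranspose_mul_self hC).le_one (C * diagonal φ) using 1 <;>
      simp [N, conjTranspose_eq_transpose_of_trivial, Matrix.mul_assoc, sq,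
        ← diagonal_mul_diagonal]
  simpa [det_mul, sq] using det_le_det_of_le hsq_nonneg hsq_le

/-- For a nonnegative diagonal `Φ` and `C` with orthonormal rows (`C Cᵀ = I`,
`K₀ ≤ K₁`): `det(C Φ Cᵀ)² ≤ det(C Φ² Cᵀ)`. -/
theorem det_sq_le_det_of_sq
    {K₀ K₁ : ℕ} (hK : K₀ ≤ K₁)
    (φ : Fin K₁ → ℝ) (hφ : ∀ k, 0 ≤ φ k)
    (C : Matrix (Fin K₀) (Fin K₁) ℝ) (hC : C * Cᵀ = 1) :
    (C * Matrix.diagonal φ * Cᵀ).det ^ 2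
      ≤ (C * Matrix.diagonal (fun k => φ k ^ 2) * Cᵀ).det :=
  det_sq_le_det_of_sq_general φ C hC
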